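/- Monotonicity of genus under edge deletion in ribbon graphs. Let G = (H, σ, θ) be a combinatorial map encoding an orientable ribbon graph, and let F′ ⊆ F ⊆ E be subsets of the edge set. Then k(F′) − bc(F′) + n(F′) ≤ k(F) − bc(F) + n(F); that is, the genus of a spanning subgraph does not exceed the genus of the ambient ribbon subgraph. -/

import Mathlib

open Finset
open scoped Classical

/-- The permutation `θ_F` acting as `θ` on the half-edges belonging to edges of the
spanning subgraph (encoded by the `θ`-invariant set `S` of half-edges) and as the
identity elsewhere.  Defined whenever `S` is `θ`-invariant and `θ` is an involution
(and as the identity permutation otherwise). -/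
noncomputable def restrictPerm {H : Type*} [DecidableEq H] (θ : Equiv.Perm H) (S : Finset H) :
    Equiv.Perm H :=
  if hcl : (∀ a ∈ S, θ a ∈ S) ∧ (∀ a, θ (θ a) = a) then
    { toFun := fun a => if a ∈ S then θ a else a
      invFun := fun a => if a ∈ S then θ a else a
      left_inv := fun a => by
        by_cases h : a ∈ S
        · simp [h, hcl.1 a h, hcl.2 a]
        · simp [h]
      right_inv := fun a => by
        by_cases h : a ∈ S
        · simp [h, hcl.1 a h, hcl.2 a]
        · simp [h] }
  else 1

/-- The number of orbits of the cyclic group generated by a permutation. -/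
noncomputable def permOrbits {H : Type*} [Fintype H] (π : Equiv.Perm H) : ℕ :=
  Nat.card (MulAction.orbitRel.Quotient (Subgroup.zpowers π) H)

/-- `v(G)`: the number of vertices, i.e. the number of orbits of `σ`. -/
noncomputable def vCount {H : Type*} [Fintype H] (σ : Equiv.Perm H) : ℕ := permOrbits σ

/-- `bc(F)`: the number of boundary components of the spanning subgraph, i.e. the
number of orbits of `σ ∘ θ_F`. -/
noncomputable def bcCount {H : Type*} [Fintype H] [DecidableEq H]
    (σ θ : Equiv.Perm H) (S : Finset H) : ℕ :=
  permOrbits (σ * restrictPerm θ S)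

/-- `k(F)`: the number of connected components of the spanning subgraph, i.e. the
number of orbits of the subgroup generated by `σ` and `θ_F`. -/
noncomputable def kCount {H : Type*} [Fintype H] [DecidableEq H]
    (σ θ : Equiv.Perm H) (S : Finset H) : ℕ :=
  Nat.card (MulAction.orbitRel.Quotient
    (Subgroup.closure {σ, restrictPerm θ S} : Subgroup (Equiv.Perm H)) H)

/-- `e(F)`: the number of edges of the spanning subgraph, i.e. half the number of
half-edges in `S` (as an integer, for use in exponents). -/
def eCount {H : Type*} (S : Finset H) : ℤ := (S.card / 2 : ℕ)

/-- `r(F) = v(G) - k(F)`: the rank of the spanning subgraph. -/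
noncomputable def rCount {H : Type*} [Fintype H] [DecidableEq H]
    (σ θ : Equiv.Perm H) (S : Finset H) : ℤ :=
  (vCount σ : ℤ) - (kCount σ θ S : ℤ)

/-- `n(F) = e(F) - r(F)`: the nullity of the spanning subgraph. -/
noncomputable def nCount {H : Type*} [Fintype H] [DecidableEq H]
    (σ θ : Equiv.Perm H) (S : Finset H) : ℤ :=
  eCount S - rCount σ θ S

/-- The spanning subgraphs `F ⊆ E`, encoded as the `θ`-invariant subsets of the
set of half-edges. -/
def spanningSets {H : Type*} [Fintype H] [DecidableEq H] (θ : Equiv.Perm H) :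
    Finset (Finset H) :=
  Finset.univ.filter (fun S => ∀ a ∈ S, θ a ∈ S)

/-!
Adding the edge `{a, θ a}` to a spanning subgraph multiplies its boundary permutation
`σ θ_F` on the right by the transposition `(a θa)`. If `a` and `θ a` lie on one boundary
cycle, that cycle splits in at most two while `a` and `θ a` were already in one component:
`k` is unchanged and `bc` rises by at most one. Otherwise the two cycles merge: `bc` drops by
one and `k` by at most one. Either way `2k - bc + e = k - bc + n + v` does not decrease, and
the theorem follows by adding the edges of `F \ F′` one at a time.
-/

open Equiv MulAction Subgroup

namespace Setoid

variable {α : Type*}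

def mergeClasses (r : Setoid α) (a b : α) : Setoid α where
  r x y := r x y ∨ (r x a ∧ r b y) ∨ (r x b ∧ r a y)
  iseqv := by
    constructor
    · exact fun x => Or.inl (r.refl x)
    · rintro x y (h | ⟨h₁, h₂⟩ | ⟨h₁, h₂⟩)
      · exact Or.inl (r.symm h)
      · exact Or.inr (Or.inr ⟨r.symm h₂, r.symm h₁⟩)
      · exact Or.inr (Or.inl ⟨r.symm h₂, r.symm h₁⟩)
    · rintro x y z (h | ⟨h₁, h₂⟩ | ⟨h₁, h₂⟩) (h' | ⟨h₁', h₂'⟩ | ⟨h₁', h₂'⟩)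
      · exact Or.inl (r.trans h h')
      · exact Or.inr (Or.inl ⟨r.trans h h₁', h₂'⟩)
      · exact Or.inr (Or.inr ⟨r.trans h h₁', h₂'⟩)
      · exact Or.inr (Or.inl ⟨h₁, r.trans h₂ h'⟩)
      · exact Or.inl (r.trans h₁ (r.trans (r.symm (r.trans h₂ h₁')) h₂'))
      · exact Or.inl (r.trans h₁ h₂')
      · exact Or.inr (Or.inr ⟨h₁, r.trans h₂ h'⟩)
      · exact Or.inl (r.trans h₁ h₂')
      · exact Or.inl (r.trans h₁ (r.trans (r.symm (r.trans h₂ h₁')) h₂'))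

variable {r s : Setoid α} {a b : α}

theorem le_mergeClasses : r ≤ r.mergeClasses a b := fun _ _ h => Or.inl h

theorem mergeClasses_le (hrs : r ≤ s) (hab : s a b) : r.mergeClasses a b ≤ s := by
  rintro x y (h | ⟨hxa, hby⟩ | ⟨hxb, hay⟩)
  · exact hrs h
  · exact s.trans (hrs hxa) (s.trans hab (hrs hby))
  · exact s.trans (hrs hxb) (s.trans (s.symm hab) (hrs hay))

def classPreserving (r : Setoid α) : Subgroup (Perm α) where
  carrier := {g | ∀ x, r (g x) x}
  one_mem' := r.refl
  mul_mem' {g h} hg hh x := r.trans (hg (h x)) (hh x)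
  inv_mem' {g} hg x := by
    simpa using r.symm (hg (g⁻¹ x))

theorem classPreserving_mono (h : r ≤ s) : r.classPreserving ≤ s.classPreserving :=
  fun _ hg x => h (hg x)

theorem mul_swap_mem_classPreserving_mergeClasses [DecidableEq α] {π : Perm α}
    (hπ : π ∈ r.classPreserving) :
    π * swap a b ∈ (r.mergeClasses a b).classPreserving := by
  intro x
  rcases eq_or_ne x a with rfl | hxa
  · exact Or.inr (Or.inr ⟨by simpa using hπ b, r.refl x⟩)
  rcases eq_or_ne x b with rfl | hxb
  · exact Or.inr (Or.inl ⟨by simpa using hπ a, r.refl x⟩)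
  · exact Or.inl (by simpa [swap_apply_of_ne_of_ne hxa hxb] using hπ x)

noncomputable def toOptionMergeClasses (r : Setoid α) (a b : α) :
    Quotient r → Option (Quotient (r.mergeClasses a b)) :=
  fun q => if q = Quotient.mk'' b then none else some (map_of_le le_mergeClasses q)

theorem toOptionMergeClasses_injective : (toOptionMergeClasses r a b).Injective := by
  intro p q hpq
  induction p using Quotient.inductionOn' with | h x => ?_
  induction q using Quotient.inductionOn' with | h y => ?_
  by_cases hx : (Quotient.mk'' x : Quotient r) = Quotient.mk'' b <;>
    by_cases hy : (Quotient.mk'' y : Quotient r) = Quotient.mk'' b <;>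
    simp only [toOptionMergeClasses, hx, hy, if_true, if_false, reduceCtorEq,
      Option.some.injEq] at hpq
  · rw [hx, hy]
  · rcases Quotient.exact' hpq with h | ⟨-, hby⟩ | ⟨hxb, -⟩
    · exact Quotient.sound' h
    · exact absurd (Quotient.sound' (r.symm hby)) hy
    · exact absurd (Quotient.sound' hxb) hx

theorem toOptionMergeClasses_surjective (hab : ¬ r a b) :
    (toOptionMergeClasses r a b).Surjective := by
  rintro (_ | q)
  · exact ⟨Quotient.mk'' b, if_pos rfl⟩
  induction q using Quotient.inductionOn' with | h x => ?_
  by_cases hx : (Quotient.mk'' x : Quotient r) = Quotient.mk'' b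
  · have ha : (Quotient.mk'' a : Quotient r) ≠ Quotient.mk'' b := fun h => hab (Quotient.exact' h)
    refine ⟨Quotient.mk'' a, ?_⟩
    simp only [toOptionMergeClasses, if_neg ha, Option.some.injEq]
    exact Quotient.sound' (Or.inr (Or.inl ⟨r.refl a, r.symm (Quotient.exact' hx)⟩))
  · exact ⟨Quotient.mk'' x, if_neg hx⟩

section Card

variable [Finite α]

theorem card_quotient_le_of_le (h : r ≤ s) : Nat.card (Quotient s) ≤ Nat.card (Quotient r) :=
  Nat.card_le_card_of_surjective (map_of_le h) fun q =>
    q.inductionOn' fun x => ⟨Quotient.mk'' x, rfl⟩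

theorem card_quotient_le_add_one_of_le_mergeClasses (h : s ≤ r.mergeClasses a b) :
    Nat.card (Quotient r) ≤ Nat.card (Quotient s) + 1 := by
  calc Nat.card (Quotient r)
      ≤ Nat.card (Option (Quotient (r.mergeClasses a b))) :=
        Nat.card_le_card_of_injective _ toOptionMergeClasses_injective
    _ = Nat.card (Quotient (r.mergeClasses a b)) + 1 := Finite.card_option
    _ ≤ Nat.card (Quotient s) + 1 := by gcongr; exact card_quotient_le_of_le h

theorem card_quotient_add_one_le_of_mergeClasses_le (h : r.mergeClasses a b ≤ s)
    (hab : ¬ r a b) : Nat.card (Quotient s) + 1 ≤ Nat.card (Quotient r) := by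
  calc Nat.card (Quotient s) + 1
      ≤ Nat.card (Quotient (r.mergeClasses a b)) + 1 := by
        gcongr; exact card_quotient_le_of_le h
    _ = Nat.card (Option (Quotient (r.mergeClasses a b))) := Finite.card_option.symm
    _ ≤ Nat.card (Quotient r) :=
        Nat.card_le_card_of_surjective _ (toOptionMergeClasses_surjective hab)

end Card

end Setoid

section Orbits

variable {α : Type*}

theorem orbitRel_le_iff_le_classPreserving {G : Subgroup (Perm α)} {r : Setoid α} :
    orbitRel G α ≤ r ↔ G ≤ r.classPreserving := by
  refine ⟨fun h g hg x => h (mem_orbit x (⟨g, hg⟩ : G)), fun h x y hxy => ?_⟩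
  obtain ⟨⟨g, hg⟩, rfl⟩ := mem_orbit_iff.1 (orbitRel_apply.1 hxy)
  exact h hg y

theorem le_classPreserving_orbitRel (G : Subgroup (Perm α)) :
    G ≤ (orbitRel G α).classPreserving :=
  orbitRel_le_iff_le_classPreserving.1 le_rfl

theorem orbitRel_zpowers_mul_le_closure (g h : Perm α) :
    orbitRel (zpowers (g * h)) α ≤ orbitRel (closure {g, h}) α :=
  orbitRel_le_iff_le_classPreserving.2 <| (zpowers_le.2 <| mul_mem
    (subset_closure (Set.mem_insert g {h})) (subset_closure (Set.mem_insert_of_mem g rfl))).trans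
    (le_classPreserving_orbitRel _)

variable [DecidableEq α]

theorem orbitRel_closure_le_mergeClasses {S : Set (Perm α)} {G : Subgroup (Perm α)} {a b : α}
    (hS : ∀ g ∈ S, g ∈ G ∨ g * swap a b ∈ G) :
    orbitRel (closure S) α ≤ (orbitRel G α).mergeClasses a b := by
  refine orbitRel_le_iff_le_classPreserving.2 (closure_le _ |>.2 fun g hg => ?_)
  rcases hS g hg with hgG | hgG
  · exact Setoid.classPreserving_mono Setoid.le_mergeClasses (le_classPreserving_orbitRel G hgG)
  · simpa only [mul_swap_mul_self, SetLike.mem_coe] using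
      Setoid.mul_swap_mem_classPreserving_mergeClasses (a := a) (b := b)
        (le_classPreserving_orbitRel G hgG)

theorem orbitRel_zpowers_mul_swap_le (π : Perm α) (a b : α) :
    orbitRel (zpowers (π * swap a b)) α ≤ (orbitRel (zpowers π) α).mergeClasses a b := by
  rw [zpowers_eq_closure]
  exact orbitRel_closure_le_mergeClasses (by simp)

theorem orbitRel_zpowers_le_mul_swap (π : Perm α) (a b : α) :
    orbitRel (zpowers π) α ≤ (orbitRel (zpowers (π * swap a b)) α).mergeClasses a b := by
  have h := orbitRel_zpowers_mul_swap_le (π * swap a b) a b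
  rwa [mul_swap_mul_self] at h

theorem orbitRel_closure_mul_swap_le_mergeClasses {g h : Perm α} {a b : α} :
    orbitRel (closure {g, h * swap a b}) α ≤ (orbitRel (closure {g, h}) α).mergeClasses a b :=
  orbitRel_closure_le_mergeClasses <| by
    rintro x (rfl | rfl)
    · exact .inl (subset_closure (Set.mem_insert x _))
    · rw [mul_swap_mul_self]
      exact .inr (subset_closure (Set.mem_insert_of_mem g rfl))

theorem orbitRel_closure_le_mergeClasses_mul_swap {g h : Perm α} {a b : α} :
    orbitRel (closure {g, h}) α ≤ (orbitRel (closure {g, h * swap a b}) α).mergeClasses a b :=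
  orbitRel_closure_le_mergeClasses <| by
    rintro x (rfl | rfl)
    · exact .inl (subset_closure (Set.mem_insert x _))
    · exact .inr (subset_closure (Set.mem_insert_of_mem g rfl))

theorem orbitRel_zpowers_mul_swap_of_not_orbitRel [Finite α] {π : Perm α} {a b : α}
    (hab : ¬ orbitRel (zpowers π) α a b) : orbitRel (zpowers (π * swap a b)) α a b := by
  set s := orbitRel (zpowers (π * swap a b)) α
  by_contra hs
  have hstep : ∀ x, s ((π * swap a b) x) x := le_classPreserving_orbitRel _ (mem_zpowers _)
  -- the `π`-cycle of `b` avoids `a`, so `π * swap a b` follows it from `π b = (π * swap a b) a`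
  have hcycle : ∀ j : ℕ, s ((π ^ (j + 1)) b) a := by
    intro j
    induction j with
    | zero => simpa using hstep a
    | succ j ih =>
      have hne_a : (π ^ (j + 1)) b ≠ a := by
        intro h
        have hb := le_classPreserving_orbitRel (zpowers π) (pow_mem (mem_zpowers π) (j + 1)) b
        rw [h] at hb
        exact hab hb
      have hne_b : (π ^ (j + 1)) b ≠ b := fun h => hs (s.symm (h ▸ ih))
      have := hstep ((π ^ (j + 1)) b)
      rw [Perm.mul_apply, swap_apply_of_ne_of_ne hne_a hne_b, ← Perm.mul_apply, ← pow_succ'] at this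
      exact s.trans this ih
  have := hcycle (orderOf π - 1)
  rw [Nat.sub_add_cancel (orderOf_pos π), pow_orderOf_eq_one, Perm.one_apply] at this
  exact hs (s.symm this)

end Orbits

section Counting

variable {α : Type*} [Fintype α] [DecidableEq α]

theorem permOrbits_mul_swap_le (π : Perm α) (a b : α) :
    permOrbits (π * swap a b) ≤ permOrbits π + 1 :=
  Setoid.card_quotient_le_add_one_of_le_mergeClasses (orbitRel_zpowers_le_mul_swap π a b)

theorem permOrbits_mul_swap_add_one_le {π : Perm α} {a b : α}
    (hab : ¬ orbitRel (zpowers π) α a b) : permOrbits (π * swap a b) + 1 ≤ permOrbits π := by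
  have hmerged := orbitRel_zpowers_mul_swap_of_not_orbitRel hab
  have hle : orbitRel (zpowers π) α ≤ orbitRel (zpowers (π * swap a b)) α :=
    (orbitRel_zpowers_le_mul_swap π a b).trans (Setoid.mergeClasses_le le_rfl hmerged)
  exact Setoid.card_quotient_add_one_le_of_mergeClasses_le
    (Setoid.mergeClasses_le hle hmerged) hab

variable {g h : Perm α} {a b : α}

theorem card_orbitRel_closure_mul_swap_le (hb : h b = b) :
    Nat.card (orbitRel.Quotient (closure {g, h * swap a b}) α) ≤
      Nat.card (orbitRel.Quotient (closure {g, h}) α) := by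
  have hab : orbitRel (closure {g, h * swap a b}) α a b := by
    have hba := le_classPreserving_orbitRel (closure {g, h * swap a b})
      (subset_closure (Set.mem_insert_of_mem g rfl)) a
    rw [Perm.mul_apply, swap_apply_left, hb] at hba
    exact (orbitRel _ α).symm hba
  exact Setoid.card_quotient_le_of_le
    (orbitRel_closure_le_mergeClasses_mul_swap.trans (Setoid.mergeClasses_le le_rfl hab))

theorem card_orbitRel_closure_le_mul_swap_add_one :
    Nat.card (orbitRel.Quotient (closure {g, h}) α) ≤
      Nat.card (orbitRel.Quotient (closure {g, h * swap a b}) α) + 1 :=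
  Setoid.card_quotient_le_add_one_of_le_mergeClasses orbitRel_closure_mul_swap_le_mergeClasses

theorem card_orbitRel_closure_le_mul_swap_of_rel (hab : orbitRel (closure {g, h}) α a b) :
    Nat.card (orbitRel.Quotient (closure {g, h}) α) ≤
      Nat.card (orbitRel.Quotient (closure {g, h * swap a b}) α) :=
  Setoid.card_quotient_le_of_le
    (orbitRel_closure_mul_swap_le_mergeClasses.trans (Setoid.mergeClasses_le le_rfl hab))

end Counting

section RibbonGraph

variable {H : Type*} {θ : Perm H}

theorem apply_notMem_of_notMem (hinv : ∀ x, θ (θ x) = x) {S : Finset H}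
    (hS : ∀ x ∈ S, θ x ∈ S) {a : H} (ha : a ∉ S) : θ a ∉ S :=
  fun h => ha (hinv a ▸ hS _ h)

variable [DecidableEq H]

def insertEdge (θ : Perm H) (a : H) (S : Finset H) : Finset H :=
  insert a (insert (θ a) S)

theorem insertEdge_closed (hinv : ∀ x, θ (θ x) = x) {S : Finset H} (hS : ∀ x ∈ S, θ x ∈ S)
    (a : H) : ∀ x ∈ insertEdge θ a S, θ x ∈ insertEdge θ a S := by
  intro x hx
  simp only [insertEdge, mem_insert] at hx ⊢
  rcases hx with rfl | rfl | hx
  · exact .inr (.inl rfl)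
  · exact .inl (hinv _)
  · exact .inr (.inr (hS x hx))

theorem restrictPerm_apply (hinv : ∀ x, θ (θ x) = x) {S : Finset H} (hS : ∀ x ∈ S, θ x ∈ S)
    (x : H) : restrictPerm θ S x = if x ∈ S then θ x else x := by
  rw [restrictPerm, dif_pos ⟨hS, hinv⟩]
  rfl

theorem restrictPerm_insertEdge (hinv : ∀ x, θ (θ x) = x) {S : Finset H}
    (hS : ∀ x ∈ S, θ x ∈ S) {a : H} (ha : a ∉ S) :
    restrictPerm θ (insertEdge θ a S) = restrictPerm θ S * swap a (θ a) := by
  have hθa := apply_notMem_of_notMem hinv hS ha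
  ext x
  rw [Perm.mul_apply, restrictPerm_apply hinv (insertEdge_closed hinv hS a),
    restrictPerm_apply hinv hS]
  rcases eq_or_ne x a with rfl | hxa
  · simp [insertEdge, hθa]
  rcases eq_or_ne x (θ a) with rfl | hxb
  · simp [insertEdge, ha, hinv]
  · simp [insertEdge, swap_apply_of_ne_of_ne hxa hxb, hxa, hxb]

theorem eCount_insertEdge (hinv : ∀ x, θ (θ x) = x) (hfp : ∀ x, θ x ≠ x) {S : Finset H}
    (hS : ∀ x ∈ S, θ x ∈ S) {a : H} (ha : a ∉ S) :
    eCount (insertEdge θ a S) = eCount S + 1 := by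
  have hcard : (insertEdge θ a S).card = S.card + 2 := by
    rw [insertEdge, card_insert_of_notMem (by simp [ha, (hfp a).symm]),
      card_insert_of_notMem (apply_notMem_of_notMem hinv hS ha)]
  rw [eCount, eCount, hcard, show (S.card + 2) / 2 = S.card / 2 + 1 by omega]
  push_cast
  rfl

variable [Fintype H]

/-- By Euler's formula `v - e + bc = 2k - 2g`, this is twice the genus. -/
noncomputable def twiceGenus (σ θ : Perm H) (S : Finset H) : ℤ :=
  kCount σ θ S - bcCount σ θ S + nCount σ θ S

theorem twiceGenus_eq (σ θ : Perm H) (S : Finset H) :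
    twiceGenus σ θ S = 2 * kCount σ θ S - bcCount σ θ S + eCount S - vCount σ := by
  rw [twiceGenus, nCount, rCount]
  ring

theorem twiceGenus_le_insertEdge (σ : Perm H) (hinv : ∀ x, θ (θ x) = x) (hfp : ∀ x, θ x ≠ x)
    {S : Finset H} (hS : ∀ x ∈ S, θ x ∈ S) {a : H} (ha : a ∉ S) :
    twiceGenus σ θ S ≤ twiceGenus σ θ (insertEdge θ a S) := by
  have hτ : restrictPerm θ S (θ a) = θ a := by
    rw [restrictPerm_apply hinv hS, if_neg (apply_notMem_of_notMem hinv hS ha)]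
  have hτT := restrictPerm_insertEdge hinv hS ha
  have hk₁ : kCount σ θ (insertEdge θ a S) ≤ kCount σ θ S := by
    rw [kCount, kCount, hτT]
    exact card_orbitRel_closure_mul_swap_le hτ
  have hk₂ : kCount σ θ S ≤ kCount σ θ (insertEdge θ a S) + 1 := by
    rw [kCount, kCount, hτT]
    exact card_orbitRel_closure_le_mul_swap_add_one
  have hbc :
      bcCount σ θ (insertEdge θ a S) = permOrbits (σ * restrictPerm θ S * swap a (θ a)) := by
    rw [bcCount, hτT, mul_assoc]
  rw [twiceGenus_eq, twiceGenus_eq, eCount_insertEdge hinv hfp hS ha]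
  by_cases hab : orbitRel (zpowers (σ * restrictPerm θ S)) H a (θ a)
  · have hk₃ : kCount σ θ S ≤ kCount σ θ (insertEdge θ a S) := by
      rw [kCount, kCount, hτT]
      exact card_orbitRel_closure_le_mul_swap_of_rel (orbitRel_zpowers_mul_le_closure _ _ hab)
    have hsplit : bcCount σ θ (insertEdge θ a S) ≤ bcCount σ θ S + 1 :=
      hbc ▸ permOrbits_mul_swap_le _ a (θ a)
    omega
  · have hmerge : bcCount σ θ (insertEdge θ a S) + 1 ≤ bcCount σ θ S :=
      hbc ▸ permOrbits_mul_swap_add_one_le hab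
    omega

theorem twiceGenus_le_of_subset (σ : Perm H) (hinv : ∀ x, θ (θ x) = x) (hfp : ∀ x, θ x ≠ x)
    {S' S : Finset H} (hS' : ∀ x ∈ S', θ x ∈ S') (hS : ∀ x ∈ S, θ x ∈ S) (hsub : S' ⊆ S) :
    twiceGenus σ θ S' ≤ twiceGenus σ θ S := by
  obtain rfl | hne := eq_or_ne S' S
  · exact le_rfl
  obtain ⟨a, haS, haS'⟩ := exists_of_ssubset (hsub.ssubset_of_ne hne)
  have hT : insertEdge θ a S' ⊆ S := by
    simp [insertEdge, insert_subset_iff, haS, hS a haS, hsub]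
  exact (twiceGenus_le_insertEdge σ hinv hfp hS' haS').trans
    (twiceGenus_le_of_subset σ hinv hfp (insertEdge_closed hinv hS' a) hS hT)
termination_by (S \ S').card
decreasing_by
  refine card_lt_card ⟨sdiff_subset_sdiff le_rfl ?_, fun h => ?_⟩
  · exact (subset_insert _ _).trans (subset_insert _ _)
  · simpa [insertEdge] using h (mem_sdiff.2 ⟨haS, haS'⟩)

end RibbonGraph

/-- **Monotonicity of genus under edge deletion.**  For an orientable ribbon graph
encoded by a combinatorial map `(H, σ, θ)` and nested spanning subgraphs
`F′ ⊆ F ⊆ E` (encoded by `θ`-invariant sets `S' ⊆ S` of half-edges), the genus does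
not increase: `k(F′) - bc(F′) + n(F′) ≤ k(F) - bc(F) + n(F)`. -/
theorem genus_monotone_of_subset
    {H : Type*} [Fintype H] [DecidableEq H] (σ θ : Equiv.Perm H)
    (hinv : ∀ a, θ (θ a) = a) (hfp : ∀ a, θ a ≠ a)
    (S' S : Finset H) (hS' : ∀ a ∈ S', θ a ∈ S') (hS : ∀ a ∈ S, θ a ∈ S)
    (hsub : S' ⊆ S) :
    (kCount σ θ S' : ℤ) - (bcCount σ θ S' : ℤ) + nCount σ θ S' ≤
      (kCount σ θ S : ℤ) - (bcCount σ θ S : ℤ) + nCount σ θ S :=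
  twiceGenus_le_of_subset σ hinv hfp hS' hS hsub
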